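/- arXiv:2209.11162 — 3 statements merged into one kernel-verified Lean document; each statement's English description precedes it below -/
import Mathlib

section
/- The Thue-Morse word is not eventually periodic: there do not exist natural numbers N and p ≥ 1 such that σ(n+p) = σ(n) for all n ≥ N. -/
open Filter Finset

/-- Binary digit-sum of `n`. -/
def digitSum (n : ℕ) : ℕ := (Nat.digits 2 n).sum

/-- The Thue-Morse sign sequence `σ(n) = (-1)^{s(n)}`. -/
def tmSign (n : ℕ) : ℤ := (-1) ^ digitSum n

lemma digitSum_two_mul (m : ℕ) : digitSum (2 * m) = digitSum m := by
  rcases Nat.eq_zero_or_pos m with h | h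
  · simp [h, digitSum]
  · unfold digitSum
    rw [Nat.digits_def' (by norm_num : 1 < 2) (by omega)]
    have h2 : (2 * m) / 2 = m := by omega
    simp [Nat.mul_mod_right, h2]

lemma digitSum_two_mul_add_one (m : ℕ) : digitSum (2 * m + 1) = digitSum m + 1 := by
  unfold digitSum
  rw [Nat.digits_def' (by norm_num : 1 < 2) (by omega)]
  have h1 : (2 * m + 1) % 2 = 1 := by omega
  have h2 : (2 * m + 1) / 2 = m := by omega
  rw [h1, h2]
  simp [Nat.add_comm]

lemma tmSign_two_mul (m : ℕ) : tmSign (2 * m) = tmSign m := by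
  simp [tmSign, digitSum_two_mul]

lemma tmSign_two_mul_add_one (m : ℕ) : tmSign (2 * m + 1) = -tmSign m := by
  simp [tmSign, digitSum_two_mul_add_one, pow_succ]

lemma tmSign_ne_zero (m : ℕ) : tmSign m ≠ 0 := by
  simp [tmSign]

lemma tm_key : ∀ p, 1 ≤ p → ∀ N, ¬ (∀ n ≥ N, tmSign (n + p) = tmSign n) := by
  intro p
  induction p using Nat.strong_induction_on with
  | _ p ih =>
    intro hp N h
    rcases Nat.even_or_odd p with ⟨q, hq⟩ | ⟨q, hq⟩
    · -- p = 2q, reduce to period q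
      have hq1 : 1 ≤ q := by omega
      apply ih q (by omega) hq1 N
      intro m hm
      have h1 := h (2 * m) (by omega)
      have e1 : tmSign (2 * (m + q)) = tmSign (2 * m) := by
        rw [show 2 * (m + q) = 2 * m + p by omega]; exact h1
      rw [tmSign_two_mul, tmSign_two_mul] at e1
      exact e1
    · -- p = 2q + 1
      have flip : ∀ m ≥ N, tmSign (m + q) = -tmSign m := by
        intro m hm
        have h1 := h (2 * m) (by omega)
        have e1 : tmSign (2 * (m + q) + 1) = tmSign (2 * m) := by
          rw [show 2 * (m + q) + 1 = 2 * m + p by omega]; exact h1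
        rw [tmSign_two_mul_add_one, tmSign_two_mul] at e1
        linarith
      rcases Nat.eq_zero_or_pos q with hq0 | hq1
      · have hf := flip N le_rfl
        rw [hq0, Nat.add_zero] at hf
        have hz := tmSign_ne_zero N
        omega
      · apply ih 1 (by omega) le_rfl (N + 2 * q)
        intro n hn
        obtain ⟨m, rfl⟩ : ∃ m, n = m + 2 * q := ⟨n - 2 * q, by omega⟩
        have hmN : m ≥ N := by omega
        have e1 : tmSign (m + 2 * q + 1) = tmSign m := by
          rw [show m + 2 * q + 1 = m + p by omega]; exact h m hmN
        have e2 : tmSign (m + 2 * q) = - tmSign (m + q) := by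
          rw [show m + 2 * q = (m + q) + q by omega]
          exact flip (m + q) (by omega)
        have e3 : tmSign (m + q) = - tmSign m := flip m hmN
        rw [e1, e2, e3, neg_neg]

/-- The Thue-Morse word is not eventually periodic. -/
theorem tmSign_not_eventually_periodic :
    ¬ ∃ (N p : ℕ), 1 ≤ p ∧ ∀ n ≥ N, tmSign (n + p) = tmSign n := by
  rintro ⟨N, p, hp, h⟩
  exact tm_key p hp N h
end

section
/- The subword complexity of the Thue-Morse sequence satisfies C_n ≤ 10n/3 for all n ≥ 1. -/
/-- The Thue-Morse sequence over `Bool` (`false = a`, `true = b`):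
`tm n = true` iff the binary digit-sum of `n` is odd. -/
def tm (n : ℕ) : Bool := (Nat.digits 2 n).sum % 2 = 1

/-- The subword complexity of an infinite binary sequence. -/
noncomputable def complexity (S : ℕ → Bool) (n : ℕ) : ℕ :=
  Set.ncard {l : List Bool | ∃ i : ℕ, l = (List.range n).map fun t => S (i + t)}

namespace TMAux

lemma tm_two_mul (k : ℕ) : tm (2 * k) = tm k := by
  rcases Nat.eq_zero_or_pos k with rfl | hk
  · rfl
  · unfold tm
    rw [Nat.digits_def' (by norm_num : 1 < 2) (by omega)]
    simp [Nat.mul_div_cancel_left _ (by norm_num : 0 < 2), Nat.mul_mod_right]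

lemma tm_two_mul_add_one (k : ℕ) : tm (2 * k + 1) = ! tm k := by
  unfold tm
  rw [Nat.digits_def' (by norm_num : 1 < 2) (by omega)]
  have h1 : (2 * k + 1) % 2 = 1 := by omega
  have h2 : (2 * k + 1) / 2 = k := by omega
  rw [h1, h2, List.sum_cons]
  rcases Nat.even_or_odd ((Nat.digits 2 k).sum) with h | h
  · have : (Nat.digits 2 k).sum % 2 = 0 := Nat.even_iff.mp h
    have : (1 + (Nat.digits 2 k).sum) % 2 = 1 := by omega
    simp_all
  · have : (Nat.digits 2 k).sum % 2 = 1 := Nat.odd_iff.mp h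
    have : (1 + (Nat.digits 2 k).sum) % 2 = 0 := by omega
    simp_all

/-- the factor of `tm` of length `L` at position `i` -/
def w (i L : ℕ) : List Bool := (List.range L).map fun t => tm (i + t)

/-- the set of factors of length `L` -/
def Fac (L : ℕ) : Set (List Bool) := {l : List Bool | ∃ i : ℕ, l = w i L}

lemma complexity_eq (L : ℕ) : complexity tm L = (Fac L).ncard := rfl

lemma getD_range_map {k s : ℕ} (f : ℕ → Bool) (h : s < k) :
    ((List.range k).map f).getD s false = f s := by
  have hlen : s < ((List.range k).map f).length := by simpa using h
  rw [List.getD_eq_getElem _ _ hlen]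
  simp

lemma fac_finite (L : ℕ) : (Fac L).Finite := by
  apply Set.Finite.subset (List.finite_length_eq (α := Bool) (n := L))
  rintro l ⟨i, rfl⟩
  simp [w]

/-- de-substitution map for even positions -/
def hE (L : ℕ) (v : List Bool) : List Bool :=
  (List.range L).map fun t => if t % 2 = 0 then v.getD (t / 2) false else !(v.getD (t / 2) false)

/-- de-substitution map for odd positions -/
def hO (L : ℕ) (v : List Bool) : List Bool :=
  (List.range L).map fun t => if t % 2 = 0 then !(v.getD (t / 2) false) else v.getD (t / 2 + 1) false

lemma w_even (j L : ℕ) : w (2 * j) L = hE L (w j ((L + 1) / 2)) := by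
  unfold w hE
  apply List.map_congr_left
  intro t ht
  have ht' : t < L := List.mem_range.mp ht
  rcases Nat.even_or_odd t with h | h
  · obtain ⟨s, rfl⟩ := h
    have hmod : (s + s) % 2 = 0 := by omega
    have hdiv : (s + s) / 2 = s := by omega
    have hs : s < (L + 1) / 2 := by omega
    rw [if_pos hmod, hdiv, getD_range_map _ hs]
    have : 2 * j + (s + s) = 2 * (j + s) := by ring
    rw [this, tm_two_mul]
  · obtain ⟨s, rfl⟩ := h
    have hmod : ¬ (2 * s + 1) % 2 = 0 := by omega
    have hdiv : (2 * s + 1) / 2 = s := by omega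
    have hs : s < (L + 1) / 2 := by omega
    rw [if_neg hmod, hdiv, getD_range_map _ hs]
    have : 2 * j + (2 * s + 1) = 2 * (j + s) + 1 := by ring
    rw [this, tm_two_mul_add_one]

lemma w_odd (j L : ℕ) : w (2 * j + 1) L = hO L (w j (L / 2 + 1)) := by
  unfold w hO
  apply List.map_congr_left
  intro t ht
  have ht' : t < L := List.mem_range.mp ht
  rcases Nat.even_or_odd t with h | h
  · obtain ⟨s, rfl⟩ := h
    have hmod : (s + s) % 2 = 0 := by omega
    have hdiv : (s + s) / 2 = s := by omega
    have hs : s < L / 2 + 1 := by omega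
    rw [if_pos hmod, hdiv, getD_range_map _ hs]
    have : 2 * j + 1 + (s + s) = 2 * (j + s) + 1 := by ring
    rw [this, tm_two_mul_add_one]
  · obtain ⟨s, rfl⟩ := h
    have hmod : ¬ (2 * s + 1) % 2 = 0 := by omega
    have hdiv : (2 * s + 1) / 2 = s := by omega
    have hs : s + 1 < L / 2 + 1 := by omega
    rw [if_neg hmod, hdiv, getD_range_map _ hs]
    have : 2 * j + 1 + (2 * s + 1) = 2 * (j + s + 1) := by ring
    rw [this, tm_two_mul, Nat.add_assoc]

lemma fac_subset (L : ℕ) :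
    Fac L ⊆ hE L '' Fac ((L + 1) / 2) ∪ hO L '' Fac (L / 2 + 1) := by
  rintro l ⟨i, rfl⟩
  rcases Nat.even_or_odd i with h | h
  · obtain ⟨j, rfl⟩ := h
    left
    exact ⟨w j ((L + 1) / 2), ⟨j, rfl⟩, by rw [← w_even j L]; congr 1; omega⟩
  · obtain ⟨j, rfl⟩ := h
    right
    exact ⟨w j (L / 2 + 1), ⟨j, rfl⟩, (w_odd j L).symm⟩

lemma complexity_rec (L : ℕ) :
    complexity tm L ≤ complexity tm ((L + 1) / 2) + complexity tm (L / 2 + 1) := by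
  rw [complexity_eq, complexity_eq, complexity_eq]
  calc (Fac L).ncard
      ≤ (hE L '' Fac ((L + 1) / 2) ∪ hO L '' Fac (L / 2 + 1)).ncard := by
        exact Set.ncard_le_ncard (fac_subset L)
          (((fac_finite _).image _).union ((fac_finite _).image _))
    _ ≤ (hE L '' Fac ((L + 1) / 2)).ncard + (hO L '' Fac (L / 2 + 1)).ncard :=
        Set.ncard_union_le _ _
    _ ≤ (Fac ((L + 1) / 2)).ncard + (Fac (L / 2 + 1)).ncard :=
        Nat.add_le_add (Set.ncard_image_le (fac_finite _)) (Set.ncard_image_le (fac_finite _))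

lemma no_cube (i : ℕ) : tm i ≠ tm (i + 1) ∨ tm (i + 1) ≠ tm (i + 2) := by
  rcases Nat.even_or_odd i with h | h
  · obtain ⟨j, rfl⟩ := h
    left
    have h1 : j + j = 2 * j := by ring
    rw [h1, tm_two_mul, tm_two_mul_add_one]
    cases tm j <;> simp
  · obtain ⟨j, rfl⟩ := h
    right
    have h1 : 2 * j + 1 + 1 = 2 * (j + 1) := by ring
    have h2 : 2 * j + 1 + 2 = 2 * (j + 1) + 1 := by ring
    rw [h1, h2, tm_two_mul, tm_two_mul_add_one]
    cases tm (j+1) <;> simp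

lemma fac2_subset : Fac 2 ⊆
    ↑({[false, false], [false, true], [true, false], [true, true]} : Finset (List Bool)) := by
  rintro l ⟨i, rfl⟩
  have : w i 2 = [tm i, tm (i + 1)] := by
    simp [w, List.range_succ]
  rw [this]
  cases tm i <;> cases tm (i + 1) <;> simp

lemma fac3_subset : Fac 3 ⊆
    ↑({[false, false, true], [false, true, false], [false, true, true],
       [true, false, false], [true, false, true], [true, true, false]} :
      Finset (List Bool)) := by
  rintro l ⟨i, rfl⟩
  have hw : w i 3 = [tm i, tm (i + 1), tm (i + 2)] := by
    simp [w, List.range_succ]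
  rw [hw]
  have h := no_cube i
  cases h0 : tm i <;> cases h1 : tm (i + 1) <;> cases h2 : tm (i + 2) <;>
    simp_all

lemma complexity_two : complexity tm 2 ≤ 4 := by
  rw [complexity_eq]
  have h := Set.ncard_le_ncard fac2_subset (Finset.finite_toSet _)
  rw [Set.ncard_coe_finset] at h
  exact h.trans (by decide)

lemma complexity_three : complexity tm 3 ≤ 6 := by
  rw [complexity_eq]
  have h := Set.ncard_le_ncard fac3_subset (Finset.finite_toSet _)
  rw [Set.ncard_coe_finset] at h
  exact h.trans (by decide)

lemma fac1_subset : Fac 1 ⊆ ↑({[false], [true]} : Finset (List Bool)) := by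
  rintro l ⟨i, rfl⟩
  have : w i 1 = [tm i] := by simp [w, List.range_succ]
  rw [this]
  cases tm i <;> simp

lemma complexity_one : complexity tm 1 ≤ 2 := by
  rw [complexity_eq]
  have h := Set.ncard_le_ncard fac1_subset (Finset.finite_toSet _)
  rw [Set.ncard_coe_finset] at h
  exact h.trans (by decide)

lemma key : ∀ m : ℕ, 3 ≤ m → (complexity tm m : ℚ) ≤ (10 * m - 10) / 3 := by
  intro m
  induction m using Nat.strong_induction_on with
  | _ m ih =>
    intro hm
    rcases Nat.lt_or_ge m 5 with h5 | h5
    · interval_cases m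
      · calc (complexity tm 3 : ℚ) ≤ 6 := by exact_mod_cast complexity_three
          _ ≤ (10 * 3 - 10) / 3 := by norm_num
      · have hrec := complexity_rec 4
        have h2 : complexity tm 2 ≤ 4 := complexity_two
        have h3 : complexity tm 3 ≤ 6 := complexity_three
        have : complexity tm 4 ≤ 10 := by
          calc complexity tm 4 ≤ complexity tm 2 + complexity tm 3 := hrec
            _ ≤ 4 + 6 := Nat.add_le_add h2 h3
        calc (complexity tm 4 : ℚ) ≤ 10 := by exact_mod_cast this
          _ ≤ (10 * 4 - 10) / 3 := by norm_num
    · set a := (m + 1) / 2 with ha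
      set b := m / 2 + 1 with hb
      have hab : a + b = m + 1 := by omega
      have ha3 : 3 ≤ a := by omega
      have hb3 : 3 ≤ b := by omega
      have haltm : a < m := by omega
      have hbltm : b < m := by omega
      have hrec := complexity_rec m
      have hA := ih a haltm ha3
      have hB := ih b hbltm hb3
      have hQ : (complexity tm m : ℚ) ≤ (complexity tm a : ℚ) + (complexity tm b : ℚ) := by
        exact_mod_cast hrec
      have habQ : (a : ℚ) + (b : ℚ) = (m : ℚ) + 1 := by exact_mod_cast hab
      calc (complexity tm m : ℚ) ≤ (10 * a - 10) / 3 + (10 * b - 10) / 3 := by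
            exact hQ.trans (add_le_add hA hB)
        _ = (10 * ((a : ℚ) + b) - 20) / 3 := by ring
        _ = (10 * m - 10) / 3 := by rw [habQ]; ring

end TMAux

/-- The subword complexity of the Thue-Morse sequence satisfies `C_n ≤ 10n/3`. -/
theorem tm_complexity_le (n : ℕ) (hn : 1 ≤ n) :
    (complexity tm n : ℚ) ≤ 10 * n / 3 := by
  rcases Nat.lt_or_ge n 3 with h | h
  · interval_cases n
    · calc (complexity tm 1 : ℚ) ≤ 2 := by exact_mod_cast TMAux.complexity_one
        _ ≤ 10 * (1 : ℕ) / 3 := by norm_num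
    · calc (complexity tm 2 : ℚ) ≤ 4 := by exact_mod_cast TMAux.complexity_two
        _ ≤ 10 * (2 : ℕ) / 3 := by norm_num
  · calc (complexity tm n : ℚ) ≤ (10 * n - 10) / 3 := TMAux.key n h
      _ ≤ 10 * n / 3 := by
        have : (0 : ℚ) ≤ n := by positivity
        linarith
end

section
/- If η: ℕ → ℚ is defined by η(0) = 1, η(1) = -1/3, η(2m) = η(m), and η(2m+1) = -(1/2)(η(m)+η(m+1)), then |η(m)| ≤ 1 for all m ∈ ℕ. -/
/-- Any function `η : ℕ → ℚ` satisfying `η(0) = 1`, `η(1) = -1/3`, `η(2m) = η(m)` and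
`η(2m+1) = -(1/2)(η(m)+η(m+1))` satisfies `|η(m)| ≤ 1` for all `m`. -/
theorem eta_abs_le_one (η : ℕ → ℚ) (h0 : η 0 = 1) (h1 : η 1 = -(1 / 3))
    (heven : ∀ m : ℕ, η (2 * m) = η m)
    (hodd : ∀ m : ℕ, η (2 * m + 1) = -(1 / 2) * (η m + η (m + 1))) :
    ∀ m : ℕ, |η m| ≤ 1 := by
  intro m
  induction m using Nat.strong_induction_on with
  | _ m ih =>
    match m with
    | 0 => rw [h0]; norm_num
    | 1 => rw [h1, abs_neg]; rw [abs_of_nonneg (by norm_num)]; norm_num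
    | (n + 2) =>
      rcases Nat.even_or_odd (n + 2) with ⟨k, hk⟩ | ⟨k, hk⟩
      · have hk' : n + 2 = 2 * k := by omega
        rw [hk', heven]
        exact ih k (by omega)
      · rw [hk, hodd]
        have h1 := ih k (by omega)
        have h2 := ih (k + 1) (by omega)
        calc |(-(1/2) : ℚ) * (η k + η (k+1))| = |η k + η (k+1)| / 2 := by
              rw [abs_mul, abs_neg, abs_of_nonneg (by norm_num : (0:ℚ) ≤ 1/2)]; ring
          _ ≤ (|η k| + |η (k+1)|) / 2 := by
              gcongr; exact abs_add_le _ _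
          _ ≤ 1 := by linarith
end
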